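/- arXiv:1505.04688 — 2 statements merged into one kernel-verified Lean document; each statement's English description precedes it below -/
import Mathlib

section
/- The unital *-subalgebra of B(F_m) generated by {a_i : i ∈ ℤ} equals the linear span of the set of all λ-forms and all π-forms; in particular, every element of the *-algebra generated by the monotone creation and annihilation operators is a finite linear combination of λ-forms and π-forms. -/
open scoped InnerProductSpace ComplexOrder
open ContinuousLinearMap Filter

noncomputable section

/-- The monotone Fock space `F_m = ℓ²(Finset ℤ)`, the Hilbert space of square-summable
complex families indexed by the finite subsets of `ℤ`. -/
abbrev Fm : Type := lp (fun _ : Finset ℤ => ℂ) 2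

/-- The canonical orthonormal basis vector `e_A`, for `A` a finite subset of `ℤ`;
`e ∅` is the vacuum vector `Ω`. -/
noncomputable def e (A : Finset ℤ) : Fm := lp.single 2 A 1

/-- `adag` is the family of monotone creation operators: `adag i` sends `e A` to
`e (A ∪ {i})` if `A = ∅` or `i < min A` (equivalently, `i < j` for all `j ∈ A`),
and to `0` otherwise. -/
def CreatesOn (adag : ℤ → (Fm →L[ℂ] Fm)) : Prop :=
  ∀ (i : ℤ) (A : Finset ℤ),
    adag i (e A) = if ∀ j ∈ A, i < j then e (insert i A) else 0

/-- `a` is the family of monotone annihilation operators: `a i` sends `e A` to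
`e (A \ {i})` if `A ≠ ∅` and `i = min A` (equivalently, `i ∈ A` and `i ≤ j` for all
`j ∈ A`), and to `0` otherwise. -/
def AnnihilatesOn (a : ℤ → (Fm →L[ℂ] Fm)) : Prop :=
  ∀ (i : ℤ) (A : Finset ℤ),
    a i (e A) = if i ∈ A ∧ ∀ j ∈ A, i ≤ j then e (A.erase i) else 0

/-- A λ-form: an operator `X = a†_{i_1}⋯a†_{i_m} a_{j_1}⋯a_{j_n}` with
`i_1 < ⋯ < i_m` and `j_1 > ⋯ > j_n` (the identity `I` when `m = n = 0`). -/
def IsLambdaForm (a adag : ℤ → (Fm →L[ℂ] Fm)) (X : Fm →L[ℂ] Fm) : Prop :=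
  ∃ is js : List ℤ, is.Chain' (· < ·) ∧ js.Chain' (· > ·) ∧
    X = (is.map adag).prod * (js.map a).prod

/-- A π-form: an operator `X = a†_{i_1}⋯a†_{i_m} a_k a†_k a_{j_1}⋯a_{j_n}` with
`i_1 < ⋯ < i_m`, `j_1 > ⋯ > j_n`, `k > i_m` and `k > j_1` (equivalently, `k` exceeds
every index occurring in the increasing and decreasing strings). -/
def IsPiForm (a adag : ℤ → (Fm →L[ℂ] Fm)) (X : Fm →L[ℂ] Fm) : Prop :=
  ∃ (is js : List ℤ) (k : ℤ), is.Chain' (· < ·) ∧ js.Chain' (· > ·) ∧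
    (∀ i ∈ is, i < k) ∧ (∀ j ∈ js, j < k) ∧
    X = (is.map adag).prod * (a k * adag k) * (js.map a).prod

/-! The adjoint of `a i` is `a† i`, so the *-algebra generated by the `a i` is spanned by
words in the `a i` and `a† i`, and it suffices that left multiplication by a generator maps
a λ- or π-form to `0` or to another form. This follows from the relations `a† i a† j = 0` for
`j ≤ i`, `a i a j = 0` for `i ≤ j`, `a i a† j = 0` for `i ≠ j`, and from `a k a† k` being the
projection onto the span of the `e A` with `k < min A`, which is absorbed by neighbouring
factors `a j`, `a† j` of larger index, and also `a k a† k a k = a k`, `a† k a k a† k = a† k`. -/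

lemma inner_e_left (B : Finset ℤ) (x : Fm) : ⟪e B, x⟫_ℂ = x B := by
  simp [e, lp.inner_single_left]

lemma e_apply (A B : Finset ℤ) : (e A : ∀ _ : Finset ℤ, ℂ) B = if B = A then 1 else 0 := by
  simp [e, lp.single_apply, Pi.single_apply]

lemma ext_e {T S : Fm →L[ℂ] Fm} (h : ∀ A, T (e A) = S (e A)) : T = S := by
  refine ContinuousLinearMap.ext fun x => (((lp.hasSum_single (by norm_num) x).mapL T).unique ?_)
  convert (lp.hasSum_single (p := 2) (by norm_num) x).mapL S using 2 with A
  rw [← mul_one (x A), ← smul_eq_mul, lp.single_smul, map_smul, map_smul, ← e, h]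

def formSpan (a adag : ℤ → (Fm →L[ℂ] Fm)) : Submodule ℂ (Fm →L[ℂ] Fm) :=
  Submodule.span ℂ {X | IsLambdaForm a adag X ∨ IsPiForm a adag X}

lemma lambda_mem_formSpan {a adag : ℤ → (Fm →L[ℂ] Fm)} {is js : List ℤ}
    (his : is.IsChain (· < ·)) (hjs : js.IsChain (· > ·)) :
    (is.map adag).prod * (js.map a).prod ∈ formSpan a adag :=
  Submodule.subset_span (Or.inl ⟨is, js, his, hjs, rfl⟩)

lemma pi_mem_formSpan {a adag : ℤ → (Fm →L[ℂ] Fm)} {is js : List ℤ} {k : ℤ}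
    (his : is.IsChain (· < ·)) (hjs : js.IsChain (· > ·))
    (hik : ∀ i ∈ is, i < k) (hjk : ∀ j ∈ js, j < k) :
    (is.map adag).prod * (a k * adag k) * (js.map a).prod ∈ formSpan a adag :=
  Submodule.subset_span (Or.inr ⟨is, js, k, his, hjs, hik, hjk, rfl⟩)

lemma one_mem_formSpan {a adag : ℤ → (Fm →L[ℂ] Fm)} : 1 ∈ formSpan a adag := by
  simpa using lambda_mem_formSpan (a := a) (adag := adag) List.isChain_nil List.isChain_nil

lemma mul_mem_formSpan {a adag : ℤ → (Fm →L[ℂ] Fm)} {g y : Fm →L[ℂ] Fm}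
    (hg : ∀ X, IsLambdaForm a adag X ∨ IsPiForm a adag X → g * X ∈ formSpan a adag)
    (hy : y ∈ formSpan a adag) : g * y ∈ formSpan a adag :=
  (Submodule.span_le (p := (formSpan a adag).comap (LinearMap.mulLeft ℂ g))).2 hg hy

section
variable {a adag : ℤ → (Fm →L[ℂ] Fm)} (ha : AnnihilatesOn a) (hadag : CreatesOn adag)
include ha hadag

omit ha in
lemma adag_mul_adag {i j : ℤ} (h : j ≤ i) : adag i * adag j = 0 := by
  refine ext_e fun A => ?_
  simp only [mul_apply_eq_comp, hadag _ _, apply_ite, map_zero, zero_apply]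
  split_ifs <;> grind [Finset.mem_insert_self, Finset.erase_insert]

omit hadag in
lemma a_mul_a {i j : ℤ} (h : i ≤ j) : a i * a j = 0 := by
  refine ext_e fun A => ?_
  simp only [mul_apply_eq_comp, ha _ _, apply_ite, map_zero, zero_apply]
  split_ifs <;> grind [Finset.mem_insert_self, Finset.erase_insert]

lemma a_mul_adag_of_ne {i j : ℤ} (h : i ≠ j) : a i * adag j = 0 := by
  refine ext_e fun A => ?_
  simp only [mul_apply_eq_comp, ha _ _, hadag _ _, apply_ite, map_zero, zero_apply]
  split_ifs <;> grind [Finset.mem_insert_self, Finset.erase_insert]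

lemma a_mul_adag_self_apply (k : ℤ) (A : Finset ℤ) :
    (a k * adag k) (e A) = if ∀ j ∈ A, k < j then e A else 0 := by
  simp only [mul_apply_eq_comp, ha _ _, hadag _ _, apply_ite, map_zero]
  split_ifs <;> grind [Finset.mem_insert_self, Finset.erase_insert]

lemma a_mul_adag_self_mul_adag {k j : ℤ} (h : k < j) : (a k * adag k) * adag j = adag j := by
  refine ext_e fun A => ?_
  simp only [mul_apply_eq_comp, a_mul_adag_self_apply ha hadag, hadag _ _, apply_ite, map_zero]
  split_ifs <;> grind [Finset.mem_insert_self, Finset.erase_insert]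

lemma a_mul_a_mul_adag_self {k j : ℤ} (h : k < j) : a j * (a k * adag k) = a j := by
  refine ext_e fun A => ?_
  rw [mul_apply_eq_comp, a_mul_adag_self_apply ha hadag]
  simp only [ha _ _, apply_ite, map_zero]
  split_ifs <;> grind [Finset.mem_insert_self, Finset.erase_insert]

lemma a_mul_a_mul_adag_self_eq_zero {k j : ℤ} (h : j ≤ k) : a j * (a k * adag k) = 0 := by
  refine ext_e fun A => ?_
  rw [mul_apply_eq_comp, a_mul_adag_self_apply ha hadag]
  simp only [ha _ _, apply_ite, map_zero, zero_apply]
  split_ifs <;> grind [Finset.mem_insert_self, Finset.erase_insert]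

lemma a_mul_adag_self_mul_a {k j : ℤ} (h : k ≤ j) : (a k * adag k) * a j = a j := by
  refine ext_e fun A => ?_
  simp only [mul_apply_eq_comp, a_mul_adag_self_apply ha hadag, ha _ _, apply_ite, map_zero]
  split_ifs <;> grind [Finset.mem_insert_self, Finset.erase_insert]

lemma adag_mul_a_mul_adag_self {k p : ℤ} (h : k ≤ p) : adag p * (a k * adag k) = adag p := by
  refine ext_e fun A => ?_
  rw [mul_apply_eq_comp, a_mul_adag_self_apply ha hadag]
  simp only [hadag _ _, apply_ite, map_zero]
  split_ifs <;> grind [Finset.mem_insert_self, Finset.erase_insert]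

lemma a_mul_adag_self_mul_a_mul_adag_self {p k : ℤ} (h : p ≤ k) :
    (a p * adag p) * (a k * adag k) = a k * adag k := by
  refine ext_e fun A => ?_
  simp only [mul_apply_eq_comp, a_mul_adag_self_apply ha hadag, apply_ite, map_zero]
  split_ifs <;> grind [Finset.mem_insert_self, Finset.erase_insert]

lemma star_a_eq_adag (i : ℤ) : star (a i) = adag i := by
  refine ext_e fun A => lp.ext (funext fun B => ?_)
  rw [← inner_e_left, ← inner_e_left, star_eq_adjoint, adjoint_inner_right, ha, hadag]
  simp only [apply_ite (⟪·, e A⟫_ℂ), apply_ite (⟪e B, ·⟫_ℂ), inner_zero_left, inner_zero_right,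
    inner_e_left, e_apply]
  split_ifs <;> grind [Finset.mem_insert_self, Finset.erase_insert, Finset.insert_erase]

omit ha in
lemma adag_mul_prod_adag_eq_zero {p : ℤ} {is : List ℤ} (his : is.IsChain (· < ·))
    (h : ¬ (p :: is).IsChain (· < ·)) : adag p * (is.map adag).prod = 0 := by
  cases is with
  | nil => exact absurd (List.isChain_singleton p) h
  | cons i is =>
    have hpi : i ≤ p := not_lt.1 fun hpi => h (List.isChain_cons_cons.2 ⟨hpi, his⟩)
    rw [List.map_cons, List.prod_cons, ← mul_assoc, adag_mul_adag hadag hpi, zero_mul]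

omit hadag in
lemma a_mul_prod_a_eq_zero {p : ℤ} {js : List ℤ} (hjs : js.IsChain (· > ·))
    (h : ¬ (p :: js).IsChain (· > ·)) : a p * (js.map a).prod = 0 := by
  cases js with
  | nil => exact absurd (List.isChain_singleton p) h
  | cons j js =>
    have hpj : p ≤ j := not_lt.1 fun hpj => h (List.isChain_cons_cons.2 ⟨hpj, hjs⟩)
    rw [List.map_cons, List.prod_cons, ← mul_assoc, a_mul_a ha hpj, zero_mul]

lemma a_mul_prod_adag_cons_of_ne {p i : ℤ} (is : List ℤ) (h : p ≠ i) :
    a p * ((i :: is).map adag).prod = 0 := by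
  rw [List.map_cons, List.prod_cons, ← mul_assoc, a_mul_adag_of_ne ha hadag h, zero_mul]

lemma a_mul_prod_adag_cons_cons {p i : ℤ} (is : List ℤ) (h : p < i) :
    a p * ((p :: i :: is).map adag).prod = ((i :: is).map adag).prod := by
  simp only [List.map_cons, List.prod_cons, ← mul_assoc]
  rw [a_mul_adag_self_mul_adag ha hadag h]

omit ha in
lemma adag_mul_lambda_mem_formSpan (p : ℤ) {is js : List ℤ}
    (his : is.IsChain (· < ·)) (hjs : js.IsChain (· > ·)) :
    adag p * ((is.map adag).prod * (js.map a).prod) ∈ formSpan a adag := by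
  by_cases h : (p :: is).IsChain (· < ·)
  · simpa [mul_assoc] using lambda_mem_formSpan h hjs
  · rw [← mul_assoc, adag_mul_prod_adag_eq_zero hadag his h, zero_mul]
    exact zero_mem _

lemma adag_mul_pi_mem_formSpan (p : ℤ) {is js : List ℤ} {k : ℤ}
    (his : is.IsChain (· < ·)) (hjs : js.IsChain (· > ·))
    (hik : ∀ i ∈ is, i < k) (hjk : ∀ j ∈ js, j < k) :
    adag p * ((is.map adag).prod * (a k * adag k) * (js.map a).prod) ∈ formSpan a adag := by
  by_cases h : (p :: is).IsChain (· < ·)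
  · by_cases hpk : p < k
    · simpa [mul_assoc] using
        pi_mem_formSpan h hjs (List.forall_mem_cons.2 ⟨hpk, hik⟩) hjk
    · obtain rfl : is = [] := by
        cases is with
        | nil => rfl
        | cons i is =>
          exact absurd ((List.isChain_cons_cons.1 h).1.trans (hik i List.mem_cons_self)) hpk
      simpa [← mul_assoc, adag_mul_a_mul_adag_self ha hadag (not_lt.1 hpk)] using
        lambda_mem_formSpan (List.isChain_singleton p) hjs
  · rw [← mul_assoc, ← mul_assoc, adag_mul_prod_adag_eq_zero hadag his h, zero_mul, zero_mul]
    exact zero_mem _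

lemma a_mul_adag_self_mul_prod_a_mem_formSpan (p : ℤ) {js : List ℤ} (hjs : js.IsChain (· > ·)) :
    a p * adag p * (js.map a).prod ∈ formSpan a adag := by
  cases js with
  | nil =>
    simpa using pi_mem_formSpan (k := p) (a := a) (adag := adag) List.isChain_nil
      List.isChain_nil (by simp) (by simp)
  | cons j js =>
    by_cases hjp : j < p
    · simpa using pi_mem_formSpan List.isChain_nil hjs (by simp)
        (List.forall_mem_cons.2
          ⟨hjp, fun _ hx => (List.rel_of_pairwise_cons hjs.pairwise hx).trans hjp⟩)
    · simpa [← mul_assoc, a_mul_adag_self_mul_a ha hadag (not_lt.1 hjp)] using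
        lambda_mem_formSpan (adag := adag) List.isChain_nil hjs

lemma a_mul_lambda_mem_formSpan (p : ℤ) {is js : List ℤ}
    (his : is.IsChain (· < ·)) (hjs : js.IsChain (· > ·)) :
    a p * ((is.map adag).prod * (js.map a).prod) ∈ formSpan a adag := by
  rw [← mul_assoc]
  match is, his with
  | [], _ =>
    by_cases h : (p :: js).IsChain (· > ·)
    · simpa [mul_assoc] using lambda_mem_formSpan (adag := adag) List.isChain_nil h
    · rw [List.map_nil, List.prod_nil, mul_one, a_mul_prod_a_eq_zero ha hjs h]
      exact zero_mem _
  | [i], _ =>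
    by_cases hpi : p = i
    · subst hpi
      simpa using a_mul_adag_self_mul_prod_a_mem_formSpan ha hadag p hjs
    · rw [a_mul_prod_adag_cons_of_ne ha hadag _ hpi, zero_mul]
      exact zero_mem _
  | i :: i' :: is, his =>
    by_cases hpi : p = i
    · subst hpi
      rw [a_mul_prod_adag_cons_cons ha hadag _ (List.isChain_cons_cons.1 his).1]
      exact lambda_mem_formSpan (List.isChain_cons_cons.1 his).2 hjs
    · rw [a_mul_prod_adag_cons_of_ne ha hadag _ hpi, zero_mul]
      exact zero_mem _

lemma a_mul_pi_mem_formSpan (p : ℤ) {is js : List ℤ} {k : ℤ}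
    (his : is.IsChain (· < ·)) (hjs : js.IsChain (· > ·))
    (hik : ∀ i ∈ is, i < k) (hjk : ∀ j ∈ js, j < k) :
    a p * ((is.map adag).prod * (a k * adag k) * (js.map a).prod) ∈ formSpan a adag := by
  rw [← mul_assoc, ← mul_assoc]
  match is, his with
  | [], _ =>
    by_cases hkp : k < p
    · have h : (p :: js).IsChain (· > ·) := by
        cases js with
        | nil => exact List.isChain_singleton p
        | cons j js => exact List.isChain_cons_cons.2 ⟨(hjk j List.mem_cons_self).trans hkp, hjs⟩
      simpa [mul_assoc, a_mul_a_mul_adag_self ha hadag hkp] using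
        lambda_mem_formSpan (adag := adag) List.isChain_nil h
    · rw [List.map_nil, List.prod_nil, mul_one,
        a_mul_a_mul_adag_self_eq_zero ha hadag (not_lt.1 hkp), zero_mul]
      exact zero_mem _
  | [i], _ =>
    by_cases hpi : p = i
    · subst hpi
      simpa [mul_assoc, a_mul_adag_self_mul_a_mul_adag_self ha hadag
        (hik p List.mem_cons_self).le]
        using pi_mem_formSpan (adag := adag) List.isChain_nil hjs (by simp) hjk
    · rw [a_mul_prod_adag_cons_of_ne ha hadag _ hpi, zero_mul, zero_mul]
      exact zero_mem _
  | i :: i' :: is, his =>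
    by_cases hpi : p = i
    · subst hpi
      rw [a_mul_prod_adag_cons_cons ha hadag _ (List.isChain_cons_cons.1 his).1]
      exact pi_mem_formSpan (List.isChain_cons_cons.1 his).2 hjs
        (fun x hx => hik x (List.mem_cons_of_mem _ hx)) hjk
    · rw [a_mul_prod_adag_cons_of_ne ha hadag _ hpi, zero_mul, zero_mul]
      exact zero_mem _

lemma a_mul_mem_formSpan (p : ℤ) {y : Fm →L[ℂ] Fm} (hy : y ∈ formSpan a adag) :
    a p * y ∈ formSpan a adag := by
  refine mul_mem_formSpan ?_ hy
  rintro _ (⟨is, js, his, hjs, rfl⟩ | ⟨is, js, k, his, hjs, hik, hjk, rfl⟩)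
  exacts [a_mul_lambda_mem_formSpan ha hadag p his hjs,
    a_mul_pi_mem_formSpan ha hadag p his hjs hik hjk]

lemma adag_mul_mem_formSpan (p : ℤ) {y : Fm →L[ℂ] Fm} (hy : y ∈ formSpan a adag) :
    adag p * y ∈ formSpan a adag := by
  refine mul_mem_formSpan ?_ hy
  rintro _ (⟨is, js, his, hjs, rfl⟩ | ⟨is, js, k, his, hjs, hik, hjk, rfl⟩)
  exacts [adag_mul_lambda_mem_formSpan hadag p his hjs,
    adag_mul_pi_mem_formSpan ha hadag p his hjs hik hjk]

lemma mul_mem_formSpan_of_mem_closure {x y : Fm →L[ℂ] Fm}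
    (hx : x ∈ Submonoid.closure (Set.range a ∪ star (Set.range a))) (hy : y ∈ formSpan a adag) :
    x * y ∈ formSpan a adag := by
  induction hx using Submonoid.closure_induction generalizing y with
  | mem g hg =>
    rcases hg with ⟨p, rfl⟩ | ⟨p, hp⟩
    · exact a_mul_mem_formSpan ha hadag p hy
    · rw [← star_star g, ← hp, star_a_eq_adag ha hadag]
      exact adag_mul_mem_formSpan ha hadag p hy
  | one => simpa using hy
  | mul x x' _ _ hx hx' => simpa only [mul_assoc] using hx (hx' hy)

lemma adjoin_le_formSpan :
    Subalgebra.toSubmodule (StarAlgebra.adjoin ℂ (Set.range a)).toSubalgebra ≤ formSpan a adag := by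
  rw [StarAlgebra.adjoin_eq_span, Submodule.span_le]
  intro x hx
  simpa only [mul_one, SetLike.mem_coe] using
    mul_mem_formSpan_of_mem_closure ha hadag hx one_mem_formSpan

lemma formSpan_le_adjoin :
    formSpan a adag ≤ Subalgebra.toSubmodule (StarAlgebra.adjoin ℂ (Set.range a)).toSubalgebra := by
  have ha_mem (i : ℤ) : a i ∈ StarAlgebra.adjoin ℂ (Set.range a) :=
    StarAlgebra.subset_adjoin ℂ _ (Set.mem_range_self i)
  have hadag_mem (i : ℤ) : adag i ∈ StarAlgebra.adjoin ℂ (Set.range a) :=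
    star_a_eq_adag ha hadag i ▸ star_mem (ha_mem i)
  have hprod {l : List ℤ} {f : ℤ → Fm →L[ℂ] Fm}
      (hf : ∀ i, f i ∈ StarAlgebra.adjoin ℂ (Set.range a)) :
      (l.map f).prod ∈ StarAlgebra.adjoin ℂ (Set.range a) :=
    list_prod_mem (List.forall_mem_map.2 fun i _ => hf i)
  rw [formSpan, Submodule.span_le]
  change _ ⊆ (StarAlgebra.adjoin ℂ (Set.range a) : Set (Fm →L[ℂ] Fm))
  rintro _ (⟨is, js, -, -, rfl⟩ | ⟨is, js, k, -, -, -, -, rfl⟩)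
  · exact mul_mem (hprod hadag_mem) (hprod ha_mem)
  · exact mul_mem (mul_mem (hprod hadag_mem) (mul_mem (ha_mem k) (hadag_mem k))) (hprod ha_mem)

end

/-- Lemma 4.3 (Lemma `lampi2`): the unital *-subalgebra `ℜ_m⁰` of `B(F_m)` generated by
the monotone annihilators `{a_i : i ∈ ℤ}` equals the linear span of the λ-forms and the
π-forms; in particular every element of it is a finite linear combination of λ-forms and
π-forms. -/
theorem monotone_star_algebra_eq_span_forms
    (a adag : ℤ → (Fm →L[ℂ] Fm))
    (ha : AnnihilatesOn a) (hadag : CreatesOn adag) :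
    (StarAlgebra.adjoin ℂ (Set.range a) : Set (Fm →L[ℂ] Fm)) =
      (Submodule.span ℂ {X : Fm →L[ℂ] Fm |
        IsLambdaForm a adag X ∨ IsPiForm a adag X} : Set (Fm →L[ℂ] Fm)) := by
  exact congrArg SetLike.coe <|
    le_antisymm (adjoin_le_formSpan ha hadag) (formSpan_le_adjoin ha hadag)

end
end

section
/- Two π-forms are equal exactly when their index data coincide: if m, n, m', n' ≥ 0, i_1 < ⋯ < i_m, j_1 > ⋯ > j_n, k_1 < ⋯ < k_{m'}, h_1 > ⋯ > h_{n'} are integers, r_1 > max(i_m, j_1), r_2 > max(k_{m'}, h_1), and a†_{i_1}⋯a†_{i_m} a_{r_1} a†_{r_1} a_{j_1}⋯a_{j_n} = a†_{k_1}⋯a†_{k_{m'}} a_{r_2} a†_{r_2} a_{h_1}⋯a_{h_{n'}} as operators on F_m, then m = m', n = n', r_1 = r_2, i_l = k_l for l = 1,…,m and j_l = h_l for l = 1,…,n. -/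
open scoped InnerProductSpace ComplexOrder
open ContinuousLinearMap Filter

noncomputable section

/-! The idea is to evaluate π-forms on basis vectors. A π-form with data `(is, r, js)` sends
`e js` to `e is`, and it kills `e A` unless every annihilation index lies in `A`; comparing the
two sides on `e js` and on `e hs` therefore gives `js = hs`, and then `is = ks`. For the middle
index, on `e (js ∪ {s})` with `s` above all other indices the form with middle index `r < s`
acts as `e (is ∪ {s})`, whereas the one with middle index `s` vanishes because `a†_s` cannot
create `s` a second time. -/

theorem e_injective : Function.Injective e := by
  intro A B h
  by_contra hne
  have hA := congrArg (fun v : Fm => (v : ∀ _ : Finset ℤ, ℂ) A) h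
  simp only [e, lp.single_apply, Pi.single_eq_same, Pi.single_eq_of_ne hne] at hA
  exact one_ne_zero hA

theorem e_ne_zero (A : Finset ℤ) : e A ≠ 0 := by
  intro h
  have hA := congrArg (fun v : Fm => (v : ∀ _ : Finset ℤ, ℂ) A) h
  simp only [e, lp.single_apply, Pi.single_eq_same] at hA
  exact one_ne_zero hA

section Evaluation

variable {a adag : ℤ → (Fm →L[ℂ] Fm)}

theorem AnnihilatesOn.apply_e_insert (ha : AnnihilatesOn a) {i : ℤ} {S : Finset ℤ}
    (hS : ∀ t ∈ S, i < t) : a i (e (insert i S)) = e S := by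
  have hiS : i ∉ S := fun hi => lt_irrefl i (hS i hi)
  have hmin : ∀ t ∈ insert i S, i ≤ t := by
    intro t ht
    rcases Finset.mem_insert.1 ht with rfl | ht
    exacts [le_rfl, (hS t ht).le]
  rw [ha, if_pos ⟨Finset.mem_insert_self i S, hmin⟩, Finset.erase_insert hiS]

theorem AnnihilatesOn.apply_e_eq_zero_or (ha : AnnihilatesOn a) (i : ℤ) (A : Finset ℤ) :
    a i (e A) = 0 ∨ i ∈ A ∧ a i (e A) = e (A.erase i) := by
  rw [ha]
  split_ifs with h
  exacts [Or.inr ⟨h.1, rfl⟩, Or.inl rfl]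

theorem AnnihilatesOn.prod_apply_e_union (ha : AnnihilatesOn a) {js : List ℤ} {S : Finset ℤ}
    (hjs : js.Pairwise (· > ·)) (hS : ∀ j ∈ js, ∀ t ∈ S, j < t) :
    (js.map a).prod (e (js.toFinset ∪ S)) = e S := by
  induction js generalizing S with
  | nil => simp
  | cons j js ih =>
    obtain ⟨hj, hjs⟩ := List.pairwise_cons.1 hjs
    have hunion : (j :: js).toFinset ∪ S = js.toFinset ∪ insert j S := by
      ext x; simp
    have hinsert : ∀ x ∈ js, ∀ t ∈ insert j S, x < t := by
      intro x hx t ht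
      rcases Finset.mem_insert.1 ht with rfl | ht
      exacts [hj x hx, hS x (List.mem_cons_of_mem j hx) t ht]
    rw [List.map_cons, List.prod_cons, mul_apply_eq_comp, hunion, ih hjs hinsert,
      ha.apply_e_insert (hS j List.mem_cons_self)]

theorem AnnihilatesOn.prod_apply_e_eq_zero_or (ha : AnnihilatesOn a) (js : List ℤ)
    (A : Finset ℤ) :
    (js.map a).prod (e A) = 0 ∨
      (∀ j ∈ js, j ∈ A) ∧ (js.map a).prod (e A) = e (A \ js.toFinset) := by
  induction js with
  | nil => simp
  | cons j js ih =>
    rw [List.map_cons, List.prod_cons, mul_apply_eq_comp]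
    rcases ih with h0 | ⟨hsub, hval⟩
    · exact Or.inl (by rw [h0, map_zero])
    rw [hval]
    rcases ha.apply_e_eq_zero_or j (A \ js.toFinset) with h0 | ⟨hj, hval'⟩
    · exact Or.inl h0
    refine Or.inr ⟨?_, ?_⟩
    · rintro x (_ | ⟨_, hx⟩)
      exacts [(Finset.mem_sdiff.1 hj).1, hsub x hx]
    · rw [hval', List.toFinset_cons, Finset.sdiff_insert]

theorem CreatesOn.apply_e_of_lt (hadag : CreatesOn adag) {i : ℤ} {S : Finset ℤ}
    (hS : ∀ t ∈ S, i < t) : adag i (e S) = e (insert i S) := by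
  rw [hadag, if_pos hS]

theorem CreatesOn.apply_e_of_mem (hadag : CreatesOn adag) {i : ℤ} {S : Finset ℤ}
    (hi : i ∈ S) : adag i (e S) = 0 := by
  rw [hadag, if_neg fun h => lt_irrefl i (h i hi)]

theorem CreatesOn.prod_apply_e (hadag : CreatesOn adag) {is : List ℤ} {S : Finset ℤ}
    (his : is.Pairwise (· < ·)) (hS : ∀ i ∈ is, ∀ t ∈ S, i < t) :
    (is.map adag).prod (e S) = e (is.toFinset ∪ S) := by
  induction is with
  | nil => simp
  | cons i is ih =>
    obtain ⟨hi, his⟩ := List.pairwise_cons.1 his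
    rw [List.map_cons, List.prod_cons, mul_apply_eq_comp,
      ih his (fun x hx => hS x (List.mem_cons_of_mem i hx)), hadag.apply_e_of_lt ?_]
    · simp [Finset.insert_union]
    intro t ht
    rcases Finset.mem_union.1 ht with ht | ht
    exacts [hi t (List.mem_toFinset.1 ht), hS i List.mem_cons_self t ht]

def piForm (a adag : ℤ → (Fm →L[ℂ] Fm)) (is : List ℤ) (k : ℤ) (js : List ℤ) : Fm →L[ℂ] Fm :=
  (is.map adag).prod * (a k * adag k) * (js.map a).prod

theorem piForm_apply_e_union (ha : AnnihilatesOn a) (hadag : CreatesOn adag)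
    {is js : List ℤ} {r : ℤ} {S : Finset ℤ}
    (his : is.Pairwise (· < ·)) (hjs : js.Pairwise (· > ·))
    (hrS : ∀ t ∈ S, r < t) (hisS : ∀ i ∈ is, ∀ t ∈ S, i < t) (hjsS : ∀ j ∈ js, ∀ t ∈ S, j < t) :
    piForm a adag is r js (e (js.toFinset ∪ S)) = e (is.toFinset ∪ S) := by
  simp only [piForm, mul_apply_eq_comp]
  rw [ha.prod_apply_e_union hjs hjsS, hadag.apply_e_of_lt hrS, ha.apply_e_insert hrS,
    hadag.prod_apply_e his hisS]

theorem piForm_apply_e_toFinset (ha : AnnihilatesOn a) (hadag : CreatesOn adag)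
    {is js : List ℤ} (r : ℤ) (his : is.Pairwise (· < ·)) (hjs : js.Pairwise (· > ·)) :
    piForm a adag is r js (e js.toFinset) = e is.toFinset := by
  simpa using piForm_apply_e_union (S := ∅) ha hadag his hjs (by simp) (by simp) (by simp)

theorem piForm_apply_e_union_singleton_self (ha : AnnihilatesOn a) (hadag : CreatesOn adag)
    (is : List ℤ) {js : List ℤ} {r : ℤ} (hjs : js.Pairwise (· > ·)) (hr : ∀ j ∈ js, j < r) :
    piForm a adag is r js (e (js.toFinset ∪ {r})) = 0 := by
  simp only [piForm, mul_apply_eq_comp]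
  rw [ha.prod_apply_e_union hjs (by simpa using hr),
    hadag.apply_e_of_mem (Finset.mem_singleton_self r), map_zero, map_zero]

theorem mem_of_piForm_apply_e_ne_zero (ha : AnnihilatesOn a) {is js : List ℤ} {r : ℤ}
    {A : Finset ℤ} (h : piForm a adag is r js (e A) ≠ 0) : ∀ j ∈ js, j ∈ A := by
  rcases ha.prod_apply_e_eq_zero_or js A with h0 | ⟨hsub, -⟩
  · simp [piForm, mul_apply_eq_comp, h0] at h
  · exact hsub

theorem not_lt_of_piForm_eq (ha : AnnihilatesOn a) (hadag : CreatesOn adag)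
    {is js ks : List ℤ} {r₁ r₂ : ℤ} (his : is.Pairwise (· < ·)) (hjs : js.Pairwise (· > ·))
    (hr₁ : ∀ i ∈ is, i < r₁) (hr₁' : ∀ j ∈ js, j < r₁)
    (heq : piForm a adag is r₁ js = piForm a adag ks r₂ js) : ¬r₁ < r₂ := by
  intro hlt
  have hr₂' : ∀ j ∈ js, j < r₂ := fun j hj => (hr₁' j hj).trans hlt
  have hval := congrArg (· (e (js.toFinset ∪ {r₂}))) heq
  rw [piForm_apply_e_union ha hadag his hjs (by simpa using hlt)
      (by simpa using fun i hi => (hr₁ i hi).trans hlt) (by simpa using hr₂'),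
    piForm_apply_e_union_singleton_self ha hadag ks hjs hr₂'] at hval
  exact e_ne_zero _ hval

end Evaluation

/-- Lemma 4.4 (ii): two π-forms are equal exactly when their index data coincide.
Here `is`/`ks` are the (strictly increasing) lists of creation indices, `js`/`hs` the
(strictly decreasing) lists of annihilation indices, and `r₁`, `r₂` the middle indices,
which dominate all other indices. -/
theorem piForm_inj
    (a adag : ℤ → (Fm →L[ℂ] Fm))
    (ha : AnnihilatesOn a) (hadag : CreatesOn adag)
    (is js ks hs : List ℤ) (r₁ r₂ : ℤ)
    (h1 : is.Chain' (· < ·)) (h2 : js.Chain' (· > ·))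
    (h3 : ks.Chain' (· < ·)) (h4 : hs.Chain' (· > ·))
    (hr₁ : ∀ i ∈ is, i < r₁) (hr₁' : ∀ j ∈ js, j < r₁)
    (hr₂ : ∀ i ∈ ks, i < r₂) (hr₂' : ∀ j ∈ hs, j < r₂)
    (heq : (is.map adag).prod * (a r₁ * adag r₁) * (js.map a).prod
         = (ks.map adag).prod * (a r₂ * adag r₂) * (hs.map a).prod) :
    is = ks ∧ js = hs ∧ r₁ = r₂ := by
  have his := List.isChain_iff_pairwise.mp h1
  have hjs := List.isChain_iff_pairwise.mp h2
  have hks := List.isChain_iff_pairwise.mp h3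
  have hhs := List.isChain_iff_pairwise.mp h4
  change piForm a adag is r₁ js = piForm a adag ks r₂ hs at heq
  have hsub : js ⊆ hs := fun j hj => List.mem_toFinset.1 <|
    mem_of_piForm_apply_e_ne_zero ha (r := r₁) (by
      rw [heq, piForm_apply_e_toFinset ha hadag r₂ hks hhs]; exact e_ne_zero _) j hj
  have hsub' : hs ⊆ js := fun j hj => List.mem_toFinset.1 <|
    mem_of_piForm_apply_e_ne_zero ha (r := r₂) (by
      rw [← heq, piForm_apply_e_toFinset ha hadag r₁ his hjs]; exact e_ne_zero _) j hj
  obtain rfl : js = hs := List.Subset.antisymm_of_pairwise hjs hhs hsub hsub'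
  obtain rfl : r₁ = r₂ := le_antisymm
    (not_lt.1 (not_lt_of_piForm_eq ha hadag hks hjs hr₂ hr₂' heq.symm))
    (not_lt.1 (not_lt_of_piForm_eq ha hadag his hjs hr₁ hr₁' heq))
  have hval := congrArg (· (e js.toFinset)) heq
  rw [piForm_apply_e_toFinset ha hadag r₁ his hjs, piForm_apply_e_toFinset ha hadag r₁ hks hjs]
    at hval
  refine ⟨his.eq_of_mem_iff hks fun x => ?_, rfl, rfl⟩
  rw [← List.mem_toFinset, e_injective hval, List.mem_toFinset]

end
end
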